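/- If K is a field that is not a prime field, then for n ≥ 3 and 3 ≤ k ≤ n, the group Γ_{n,k} = UT_n(K)/γ_k(UT_n(K)) admits a class preserving automorphism that is not inner: Aut_c(Γ_{n,k}) ≠ Inn(Γ_{n,k}). -/

import Mathlib

open Matrix

/-- A square matrix is lower unitriangular if it has `1`s on the diagonal and
`0`s above the diagonal. -/
def IsLowerUni {n : ℕ} {R : Type*} [CommRing R] (A : Matrix (Fin n) (Fin n) R) : Prop :=
  (∀ i, A i i = 1) ∧ ∀ i j : Fin n, i < j → A i j = 0

theorem IsLowerUni.one {n : ℕ} {R : Type*} [CommRing R] :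
    IsLowerUni (1 : Matrix (Fin n) (Fin n) R) :=
  ⟨fun i => by simp, fun i j hij => by simp [Matrix.one_apply, Fin.ne_of_lt hij]⟩

theorem IsLowerUni.mul {n : ℕ} {R : Type*} [CommRing R]
    {A B : Matrix (Fin n) (Fin n) R} (hA : IsLowerUni A) (hB : IsLowerUni B) :
    IsLowerUni (A * B) := by
  constructor
  · intro i
    rw [Matrix.mul_apply, Finset.sum_eq_single i]
    · rw [hA.1, hB.1, one_mul]
    · intro k _ hk
      rcases lt_or_gt_of_ne hk with h | h
      · rw [hB.2 k i h, mul_zero]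
      · rw [hA.2 i k h, zero_mul]
    · intro h; exact absurd (Finset.mem_univ i) h
  · intro i j hij
    rw [Matrix.mul_apply]
    apply Finset.sum_eq_zero
    intro k _
    rcases le_or_gt k i with h | h
    · rw [hB.2 k j (lt_of_le_of_lt h hij), mul_zero]
    · rw [hA.2 i k h, zero_mul]

/-- The unitriangular group `UT_n(R)`: the subgroup of the units of the matrix
ring consisting of the lower unitriangular matrices. -/
def UT (n : ℕ) (R : Type*) [CommRing R] : Subgroup (Matrix (Fin n) (Fin n) R)ˣ where
  carrier := {A | IsLowerUni (A : Matrix (Fin n) (Fin n) R) ∧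
    IsLowerUni ((A⁻¹ : (Matrix (Fin n) (Fin n) R)ˣ) : Matrix (Fin n) (Fin n) R)}
  one_mem' := ⟨IsLowerUni.one, by simpa using IsLowerUni.one⟩
  mul_mem' := by
    intro a b ha hb
    refine ⟨?_, ?_⟩
    · simpa [Units.val_mul] using ha.1.mul hb.1
    · simpa [_root_.mul_inv_rev, Units.val_mul] using hb.2.mul ha.2
  inv_mem' := by
    intro a ha
    exact ⟨ha.2, by simpa using ha.1⟩

/-- `Γ_{n,k} = UT_n(K)/γ_k(UT_n(K))`; here `γ_k` (`1`-based, `γ_1(G) = G`) is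
`lowerCentralSeries _ (k-1)` in Mathlib's `0`-based indexing. -/
def Gamma (n k : ℕ) (K : Type*) [CommRing K] :=
  UT n K ⧸ (⊤ : Subgroup (UT n K)).lowerCentralSeries (k - 1)

instance (n k : ℕ) (K : Type*) [CommRing K] : Group (Gamma n k K) :=
  QuotientGroup.Quotient.group _


namespace GammaAux
open scoped commutatorElement
variable {n : ℕ} {K : Type*} [Field K]

/-- `M` vanishes at all entries of depth `< d` (incl. diagonal & above if `d ≥ 1`). -/
def SubDiag (d : ℕ) (M : Matrix (Fin n) (Fin n) K) : Prop :=
  ∀ i j : Fin n, (i : ℕ) < (j : ℕ) + d → M i j = 0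

lemma SubDiag.zero (d : ℕ) : SubDiag d (0 : Matrix (Fin n) (Fin n) K) := fun _ _ _ => rfl

lemma SubDiag.add {d : ℕ} {M N : Matrix (Fin n) (Fin n) K} (hM : SubDiag d M)
    (hN : SubDiag d N) : SubDiag d (M + N) := fun i j h => by
  simp [Matrix.add_apply, hM i j h, hN i j h]

lemma SubDiag.neg {d : ℕ} {M : Matrix (Fin n) (Fin n) K} (hM : SubDiag d M) :
    SubDiag d (-M) := fun i j h => by simp [hM i j h]

lemma SubDiag.sub {d : ℕ} {M N : Matrix (Fin n) (Fin n) K} (hM : SubDiag d M)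
    (hN : SubDiag d N) : SubDiag d (M - N) := by
  rw [sub_eq_add_neg]; exact hM.add hN.neg

lemma SubDiag.anti {d d' : ℕ} (h : d' ≤ d) {M : Matrix (Fin n) (Fin n) K}
    (hM : SubDiag d M) : SubDiag d' M := fun i j hij => hM i j (by omega)

lemma SubDiag.mul {d e : ℕ} {M N : Matrix (Fin n) (Fin n) K} (hM : SubDiag d M)
    (hN : SubDiag e N) : SubDiag (d + e) (M * N) := by
  intro i j hij
  rw [Matrix.mul_apply]
  apply Finset.sum_eq_zero
  intro m _
  rcases lt_or_ge (i : ℕ) ((m : ℕ) + d) with h | h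
  · rw [hM i m h, zero_mul]
  · rw [hN m j (by omega), mul_zero]

lemma SubDiag.eq_zero {M : Matrix (Fin n) (Fin n) K} (hM : SubDiag n M) : M = 0 := by
  ext i j; exact hM i j (by omega)

lemma isLowerUni_iff_subDiag {A : Matrix (Fin n) (Fin n) K} :
    IsLowerUni A ↔ SubDiag 1 (A - 1) := by
  constructor
  · rintro ⟨h1, h2⟩ i j hij
    rcases eq_or_lt_of_le (Nat.lt_succ_iff.mp hij) with h | h
    · have : i = j := Fin.ext h
      subst this
      simp [Matrix.sub_apply, h1 i]
    · have hij' : i < j := h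
      simp [Matrix.sub_apply, h2 i j hij', Matrix.one_apply_ne (Fin.ne_of_lt hij')]
  · intro h
    constructor
    · intro i
      have := h i i (by omega)
      simpa [Matrix.sub_apply] using sub_eq_zero.mp (by simpa using this)
    · intro i j hij
      have := h i j (by omega)
      rw [Matrix.sub_apply, Matrix.one_apply_ne (Fin.ne_of_lt hij), sub_zero] at this
      exact this

/-- matrix value of an element of `UT n K`. -/
def mval (u : ↥(UT n K)) : Matrix (Fin n) (Fin n) K :=
  ((u : (Matrix (Fin n) (Fin n) K)ˣ) : Matrix (Fin n) (Fin n) K)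

@[simp] lemma mval_mul (u v : ↥(UT n K)) : mval (u * v) = mval u * mval v := rfl

@[simp] lemma mval_one : mval (1 : ↥(UT n K)) = 1 := rfl

lemma mval_mul_inv (u : ↥(UT n K)) : mval u * mval u⁻¹ = 1 := by
  rw [mval, mval, ← Units.val_mul, ← Subgroup.coe_mul, mul_inv_cancel]
  rfl

lemma mval_inv_mul (u : ↥(UT n K)) : mval u⁻¹ * mval u = 1 := by
  rw [mval, mval, ← Units.val_mul, ← Subgroup.coe_mul, inv_mul_cancel]
  rfl

lemma mval_subDiag (u : ↥(UT n K)) : SubDiag 1 (mval u - 1) :=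
  isLowerUni_iff_subDiag.mp u.2.1

lemma mval_inv_subDiag (u : ↥(UT n K)) : SubDiag 1 (mval u⁻¹ - 1) :=
  isLowerUni_iff_subDiag.mp u.2.2

lemma mval_eq_one {u : ↥(UT n K)} (h : mval u = 1) : u = 1 :=
  Subtype.ext (Units.ext h)

lemma SubDiag.mul_unitri_right {d : ℕ} {C : Matrix (Fin n) (Fin n) K} (hC : SubDiag d C)
    (u : ↥(UT n K)) : SubDiag d (C * mval u) := by
  have : C * mval u = C + C * (mval u - 1) := by noncomm_ring
  rw [this]
  exact hC.add (((hC.mul (mval_subDiag u)).anti (by omega)))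

lemma SubDiag.mul_unitri_left {d : ℕ} {C : Matrix (Fin n) (Fin n) K} (hC : SubDiag d C)
    (u : ↥(UT n K)) : SubDiag d (mval u * C) := by
  have : mval u * C = C + (mval u - 1) * C := by noncomm_ring
  rw [this]
  exact hC.add ((((mval_subDiag u).mul hC)).anti (by omega))



lemma std_subDiag {d : ℕ} {i j : Fin n} (h : (j : ℕ) + d ≤ (i : ℕ)) (x : K) :
    SubDiag d (single i j x) := by
  intro a b hab
  apply single_apply_of_ne
  rintro ⟨rfl, rfl⟩
  omega

lemma std_mul_apply (i j : Fin n) (c : K) (M : Matrix (Fin n) (Fin n) K) (a b : Fin n) :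
    (single i j c * M) a b = if a = i then c * M j b else 0 := by
  by_cases h : a = i
  · subst h; simp [single_mul_apply_same]
  · simp [single_mul_apply_of_ne _ _ _ _ _ h, h]

lemma mul_std_apply (i j : Fin n) (c : K) (M : Matrix (Fin n) (Fin n) K) (a b : Fin n) :
    (M * single i j c) a b = if b = j then M a i * c else 0 := by
  by_cases h : b = j
  · subst h; simp [mul_single_apply_same]
  · simp [mul_single_apply_of_ne _ _ _ _ _ h, h]

/-- elementary unit `1 + x E_{ij}`, `i ≠ j`. -/
def elemU (i j : Fin n) (hij : j ≠ i) (x : K) : (Matrix (Fin n) (Fin n) K)ˣ where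
  val := 1 + single i j x
  inv := 1 - single i j x
  val_inv := by
    have h0 : single i j x * single i j x = 0 :=
      single_mul_single_of_ne _ _ _ _ hij _
    noncomm_ring
    rw [h0]
    simp
  inv_val := by
    have h0 : single i j x * single i j x = 0 :=
      single_mul_single_of_ne _ _ _ _ hij _
    noncomm_ring
    rw [h0]
    simp

/-- elementary element of `UT n K` : `1 + x E_{ij}` for `j < i`. -/
def elemG (i j : Fin n) (h : (j : ℕ) < (i : ℕ)) (x : K) : ↥(UT n K) :=
  ⟨elemU i j (fun e => by rw [e] at h; omega) x, by
    constructor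
    · apply isLowerUni_iff_subDiag.mpr
      simpa [elemU] using (std_subDiag (d := 1) (by omega) x)
    · apply isLowerUni_iff_subDiag.mpr
      show SubDiag 1 (1 - single i j x - 1)
      have : (1 : Matrix (Fin n) (Fin n) K) - single i j x - 1
          = -single i j x := by abel
      rw [this]
      exact (std_subDiag (d := 1) (by omega) x).neg⟩

lemma mval_elemG (i j : Fin n) (h : (j : ℕ) < (i : ℕ)) (x : K) :
    mval (elemG i j h x) = 1 + single i j x := rfl

lemma elemG_inv (i j : Fin n) (h : (j : ℕ) < (i : ℕ)) (x : K) :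
    (elemG i j h x)⁻¹ = elemG i j h (-x) := by
  have hne : j ≠ i := fun e => by rw [e] at h; omega
  apply Subtype.ext
  rw [InvMemClass.coe_inv]
  apply Units.ext
  show (elemU i j hne x).inv = (elemU i j hne (-x)).val
  show 1 - single i j x = 1 + single i j (-x)
  have : single i j (-x) = -single i j x := by
    ext a b
    simp [single, Matrix.of_apply]
    split <;> simp
  rw [this]; abel

lemma elemG_zero (i j : Fin n) (h : (j : ℕ) < (i : ℕ)) :
    elemG i j h (0 : K) = 1 := by
  apply mval_eq_one
  rw [mval_elemG]
  simp

lemma elemG_mul_same (i j : Fin n) (h : (j : ℕ) < (i : ℕ)) (x y : K) :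
    elemG i j h x * elemG i j h y = elemG i j h (x + y) := by
  apply Subtype.ext
  apply Units.ext
  show (mval (elemG i j h x * elemG i j h y)) = mval (elemG i j h (x + y))
  rw [mval_mul, mval_elemG, mval_elemG, mval_elemG]
  have h0 : single i j x * single i j y = 0 :=
    single_mul_single_of_ne _ _ _ _ (fun e => by rw [e] at h; omega) _
  have : single i j (x + y) = single i j x + single i j y := by
    ext a b
    simp [single, Matrix.of_apply]
    split <;> simp
  rw [this]
  noncomm_ring
  rw [h0]
  simp

/-- the key commutator identity `[1 + xE_{il}, 1 + E_{lj}] = 1 + x E_{ij}`. -/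
lemma elemG_commutator (i l j : Fin n) (hli : (l : ℕ) < (i : ℕ)) (hjl : (j : ℕ) < (l : ℕ))
    (x : K) :
    elemG i j (by omega) x = ⁅elemG i l hli x, elemG l j hjl (1 : K)⁆ := by
  apply Subtype.ext
  apply Units.ext
  show mval (elemG i j _ x)
      = mval (elemG i l hli x * elemG l j hjl 1 * (elemG i l hli x)⁻¹ * (elemG l j hjl 1)⁻¹)
  rw [elemG_inv, elemG_inv]
  simp only [mval_mul, mval_elemG]
  set X := single i l x with hX
  set Y := single l j (1 : K) with hY
  have hne_li : l ≠ i := fun e => by rw [e] at hli; omega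
  have hne_jl : j ≠ l := fun e => by rw [e] at hjl; omega
  have hne_ji : j ≠ i := fun e => by rw [e] at hjl; omega
  have hXX : X * X = 0 := single_mul_single_of_ne _ _ _ _ hne_li _
  have hYY : Y * Y = 0 := single_mul_single_of_ne _ _ _ _ hne_jl _
  have hYX : Y * X = 0 := single_mul_single_of_ne _ _ _ _ hne_ji _
  have hXY : X * Y = single i j x := by
    rw [hX, hY, single_mul_single_same, mul_one]
  have hXmn : single i l (-x) = -X := by
    ext a b; simp [hX, single, Matrix.of_apply]; split <;> simp
  have hYmn : single l j (-1 : K) = -Y := by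
    ext a b; simp [hY, single, Matrix.of_apply]; split <;> simp
  rw [hXmn, hYmn, ← hXY]
  have hXXY : X * (X * Y) = 0 := by rw [← mul_assoc, hXX, zero_mul]
  have hYXY : Y * (X * Y) = 0 := by rw [← mul_assoc, hYX, zero_mul]
  noncomm_ring
  simp only [hXX, hYY, hYX, hXXY, hYXY, mul_zero, zero_mul, smul_zero, add_zero, zero_add,
    neg_zero]



/-- The pattern subgroup of `UT n K` of elements congruent to `1` below depth `d`. -/
def PG (n : ℕ) (K : Type*) [Field K] (d : ℕ) : Subgroup ↥(UT n K) where
  carrier := {u | SubDiag d (mval u - 1)}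
  one_mem' := by
    show SubDiag d (mval (1 : ↥(UT n K)) - 1)
    rw [mval_one, sub_self]
    exact SubDiag.zero d
  mul_mem' := by
    intro a b ha hb
    show SubDiag d (mval (a * b) - 1)
    have : mval (a * b) - 1 = (mval a - 1) * (mval b - 1) + (mval a - 1) + (mval b - 1) := by
      rw [mval_mul]; noncomm_ring
    rw [this]
    exact (((ha.mul hb).anti (by omega)).add ha).add hb
  inv_mem' := by
    intro a ha
    show SubDiag d (mval a⁻¹ - 1)
    have : mval a⁻¹ - 1 = -((mval a⁻¹ - 1) * (mval a - 1)) - (mval a - 1) := by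
      have h1 : mval a⁻¹ * mval a = 1 := mval_inv_mul a
      have : (mval a⁻¹ - 1) * (mval a - 1) = 1 - mval a⁻¹ - mval a + 1 := by
        rw [sub_mul, mul_sub, mul_sub, h1]; noncomm_ring
      rw [this]; abel
    rw [this]
    exact (((mval_inv_subDiag a).mul ha).anti (by omega)).neg.sub ha

lemma mem_PG_iff {d : ℕ} {u : ↥(UT n K)} : u ∈ PG n K d ↔ SubDiag d (mval u - 1) := Iff.rfl

/-- Easy direction: the lower central series is contained in the pattern subgroups. -/
lemma lcs_le_PG (m : ℕ) : (⊤ : Subgroup ↥(UT n K)).lowerCentralSeries m ≤ PG n K (m + 1) := by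
  induction m with
  | zero =>
    intro u _
    exact mem_PG_iff.mpr (mval_subDiag u)
  | succ m ih =>
    show ⁅(⊤ : Subgroup ↥(UT n K)).lowerCentralSeries m, (⊤ : Subgroup ↥(UT n K))⁆ ≤ PG n K (m + 2)
    rw [Subgroup.commutator_le]
    intro a ha b _
    apply mem_PG_iff.mpr
    have hA : SubDiag (m + 1) (mval a - 1) := mem_PG_iff.mp (ih ha)
    have hB : SubDiag 1 (mval b - 1) := mval_subDiag b
    have key : mval ⁅a, b⁆ - 1
        = ((mval a - 1) * (mval b - 1) - (mval b - 1) * (mval a - 1))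
          * (mval a⁻¹ * mval b⁻¹) := by
      have h1 : mval ⁅a, b⁆ = mval a * mval b * mval a⁻¹ * mval b⁻¹ := by
        rw [commutatorElement_def]; simp [mval_mul]
      have h2 : mval b * mval a * (mval a⁻¹ * mval b⁻¹) = 1 := by
        have e1 : mval b * mval a * (mval a⁻¹ * mval b⁻¹)
            = mval b * (mval a * mval a⁻¹) * mval b⁻¹ := by noncomm_ring
        rw [e1, mval_mul_inv, mul_one, mval_mul_inv]
      have h3 : mval a * mval b * mval a⁻¹ * mval b⁻¹
          = mval a * mval b * (mval a⁻¹ * mval b⁻¹) := by noncomm_ring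
      have h4 : mval ⁅a, b⁆ - 1
          = (mval a * mval b - mval b * mval a) * (mval a⁻¹ * mval b⁻¹) := by
        rw [h1, sub_mul, h3, h2]
      rw [h4]; noncomm_ring
    rw [key, ← mval_mul]
    exact (((hA.mul hB).sub ((hB.mul hA).anti (by omega))).mul_unitri_right _)

/-- Hard direction, elementary case: deep elementary matrices lie deep
in the lower central series. -/
lemma elemG_mem_lcs (m : ℕ) : ∀ (i j : Fin n) (h : (j : ℕ) < (i : ℕ)) (x : K),
    (j : ℕ) + m + 1 ≤ (i : ℕ) → elemG i j h x ∈ (⊤ : Subgroup ↥(UT n K)).lowerCentralSeries m := by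
  induction m with
  | zero => intro i j h x _; exact Subgroup.mem_top _
  | succ m ih =>
    intro i j h x hd
    have hln : (j : ℕ) + 1 < n := by have := i.2; omega
    set l : Fin n := ⟨(j : ℕ) + 1, by omega⟩ with hl
    have hli : (l : ℕ) < (i : ℕ) := by simp [hl]; omega
    have hjl : (j : ℕ) < (l : ℕ) := by simp [hl]
    rw [elemG_commutator i l j hli hjl x]
    show _ ∈ ⁅(⊤ : Subgroup ↥(UT n K)).lowerCentralSeries m, (⊤ : Subgroup ↥(UT n K))⁆
    exact Subgroup.commutator_mem_commutator (ih i l hli x (by simp [hl]; omega))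
      (Subgroup.mem_top _)

/-- Hard direction: pattern subgroups are inside the lower central series. -/
lemma PG_le_lcs (m : ℕ) : ∀ (c d : ℕ), m + 1 ≤ d → n ≤ c + d →
    ∀ u : ↥(UT n K), SubDiag d (mval u - 1) → u ∈ (⊤ : Subgroup ↥(UT n K)).lowerCentralSeries m := by
  intro c
  induction c with
  | zero =>
    intro d hmd hnd u hu
    have : mval u - 1 = 0 := (hu.anti (by omega)).eq_zero
    have : mval u = 1 := by rwa [sub_eq_zero] at this
    rw [mval_eq_one this]
    exact Subgroup.one_mem _
  | succ c ihc =>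
    intro d hmd hnd
    -- inner induction, clearing the `d`-th subdiagonal column by column
    suffices inner : ∀ (c' t : ℕ), n ≤ t + c' → ∀ u : ↥(UT n K), SubDiag d (mval u - 1) →
        (∀ i j : Fin n, (i : ℕ) = (j : ℕ) + d → (j : ℕ) < t → mval u i j = 0) →
        u ∈ (⊤ : Subgroup ↥(UT n K)).lowerCentralSeries m by
      intro u hu
      exact inner n 0 (by omega) u hu (by omega)
    intro c'
    induction c' with
    | zero =>
      intro t hnt u hu hclear
      apply ihc (d + 1) (by omega) (by omega) u
      intro i j hij
      rcases lt_or_ge (i : ℕ) ((j : ℕ) + d) with hlt | hge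
      · exact hu i j hlt
      · have hieq : (i : ℕ) = (j : ℕ) + d := by omega
        have hne : i ≠ j := by intro e; rw [e] at hieq; omega
        rw [Matrix.sub_apply, hclear i j hieq (by have := j.2; omega),
          Matrix.one_apply_ne hne, sub_zero]
    | succ c' ihc' =>
      intro t hnt u hu hclear
      rcases lt_or_ge (t + d) n with hlt | hge
      · -- peel the entry at `(t+d, t)`
        set j0 : Fin n := ⟨t, by omega⟩ with hj0
        set i0 : Fin n := ⟨t + d, hlt⟩ with hi0
        have h0 : (j0 : ℕ) < (i0 : ℕ) := by simp [hi0, hj0]; omega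
        set x := mval u i0 j0 with hx
        set e : ↥(UT n K) := elemG i0 j0 h0 x with he
        have hv : u = e * (e⁻¹ * u) := by group
        have hmem_e : e ∈ (⊤ : Subgroup ↥(UT n K)).lowerCentralSeries m :=
          elemG_mem_lcs m i0 j0 h0 x (by simp [hi0, hj0]; omega)
        have hval : ∀ a b : Fin n, mval (e⁻¹ * u) a b
            = mval u a b - (if a = i0 then x * mval u j0 b else 0) := by
          intro a b
          rw [mval_mul, he, elemG_inv, mval_elemG]
          have : (1 + single i0 j0 (-x)) * mval u
              = mval u + single i0 j0 (-x) * mval u := by noncomm_ring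
          rw [this, Matrix.add_apply, std_mul_apply]
          split <;> simp [neg_mul]; ring
        have hu' : SubDiag d (mval (e⁻¹ * u) - 1) := by
          intro a b hab
          rw [Matrix.sub_apply, hval a b]
          have h1 : mval u a b - (1 : Matrix (Fin n) (Fin n) K) a b = 0 := by
            have := hu a b hab; rwa [Matrix.sub_apply] at this
          by_cases hai : a = i0
          · rw [if_pos hai]
            have hbj : (j0 : ℕ) < (b : ℕ) := by
              rw [hai] at hab; simp [hi0, hj0] at hab ⊢; omega
            have hz : mval u j0 b = 0 := by
              have := mval_subDiag u j0 b (by omega)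
              rw [Matrix.sub_apply, Matrix.one_apply_ne (Fin.ne_of_lt hbj), sub_zero] at this
              exact this
            rw [hz, mul_zero, sub_zero]
            exact h1
          · rw [if_neg hai, sub_zero]
            exact h1
        have hclear' : ∀ i j : Fin n, (i : ℕ) = (j : ℕ) + d → (j : ℕ) < t + 1 →
            mval (e⁻¹ * u) i j = 0 := by
          intro i j hij hjt
          rw [hval i j]
          rcases lt_or_ge (j : ℕ) t with hj | hj
          · have hne : i ≠ i0 := by
              intro ee
              rw [ee] at hij; simp [hi0] at hij; omega
            rw [if_neg hne, sub_zero]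
            exact hclear i j hij hj
          · have hjj : j = j0 := Fin.ext (by simp [hj0]; omega)
            have hii : i = i0 := Fin.ext (by simp [hi0, hij, hjj, hj0])
            rw [if_pos hii, hii, hjj]
            have hdiag : mval u j0 j0 = 1 := by
              have := mval_subDiag u j0 j0 (by omega)
              rw [Matrix.sub_apply, Matrix.one_apply_eq] at this
              exact sub_eq_zero.mp this
            rw [hdiag, mul_one, ← hx, sub_self]
        rw [hv]
        exact Subgroup.mul_mem _ hmem_e (ihc' (t + 1) (by omega) (e⁻¹ * u) hu' hclear')
      · -- no entries remain on the `d`-th subdiagonal beyond column `t`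
        apply ihc (d + 1) (by omega) (by omega) u
        intro i j hij
        rcases lt_or_ge (i : ℕ) ((j : ℕ) + d) with hlt' | hge'
        · exact hu i j hlt'
        · have hieq : (i : ℕ) = (j : ℕ) + d := by omega
          have hne : i ≠ j := by intro e; rw [e] at hieq; omega
          rw [Matrix.sub_apply, hclear i j hieq (by have := i.2; omega),
            Matrix.one_apply_ne hne, sub_zero]

lemma mem_lcs_of_subDiag {m : ℕ} {u : ↥(UT n K)} (h : SubDiag (m + 1) (mval u - 1)) :
    u ∈ (⊤ : Subgroup ↥(UT n K)).lowerCentralSeries m :=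
  PG_le_lcs m n (m + 1) le_rfl (by omega) u h



lemma mval_diag (u : ↥(UT n K)) (a : Fin n) : mval u a a = 1 := by
  have := mval_subDiag u a a (by omega)
  rw [Matrix.sub_apply, Matrix.one_apply_eq] at this
  exact sub_eq_zero.mp this

lemma mval_upper (u : ↥(UT n K)) {a b : Fin n} (h : (a : ℕ) < (b : ℕ)) : mval u a b = 0 := by
  have := mval_subDiag u a b (by omega)
  rwa [Matrix.sub_apply, Matrix.one_apply_ne (Fin.ne_of_lt h), sub_zero] at this

/-- congruence helpers -/
lemma subDiag_inv_mul {d : ℕ} (u v : ↥(UT n K)) (h : SubDiag d (mval v - mval u)) :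
    SubDiag d (mval (u⁻¹ * v) - 1) := by
  have : mval (u⁻¹ * v) - 1 = mval u⁻¹ * (mval v - mval u) := by
    rw [mul_sub, mval_inv_mul, mval_mul]
  rw [this]
  exact h.mul_unitri_left u⁻¹

lemma subDiag_sub_of_inv_mul {d : ℕ} (u v : ↥(UT n K))
    (h : SubDiag d (mval (u⁻¹ * v) - 1)) : SubDiag d (mval v - mval u) := by
  have : mval v - mval u = mval u * (mval (u⁻¹ * v) - 1) := by
    rw [mul_sub, mul_one, ← mval_mul]
    have : u * (u⁻¹ * v) = v := by group
    rw [this]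
  rw [this]
  exact h.mul_unitri_left u

/-- positions used in the construction -/
structure Pos (n k : ℕ) where
  r : Fin n
  q : Fin n
  z : Fin n
  hr : (r : ℕ) = k - 1
  hq : (q : ℕ) = k - 2
  hz : (z : ℕ) = 0
  hk : 3 ≤ k

namespace Pos
variable {k : ℕ}

lemma hkn (P : Pos n k) : k ≤ n := by have := P.r.2; have := P.hr; have := P.hk; omega

lemma hqr (P : Pos n k) : (P.q : ℕ) < (P.r : ℕ) := by
  have := P.hr; have := P.hq; have := P.hk; omega

lemma hzq (P : Pos n k) : (P.z : ℕ) < (P.q : ℕ) := by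
  have := P.hz; have := P.hq; have := P.hk; omega

lemma hzr (P : Pos n k) : (P.z : ℕ) < (P.r : ℕ) := lt_trans P.hzq P.hqr

end Pos

variable {k : ℕ}

/-- the entry `A_{k, k-1}` (`1`-based) as a function on `UT n K`. -/
def fE (P : Pos n k) (u : ↥(UT n K)) : K := mval u P.r P.q

lemma fE_one (P : Pos n k) : fE P (1 : ↥(UT n K)) = 0 := by
  rw [fE, mval_one, Matrix.one_apply_ne (Fin.ne_of_gt P.hqr)]

lemma fE_mul (P : Pos n k) (u v : ↥(UT n K)) : fE P (u * v) = fE P u + fE P v := by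
  rw [fE, fE, fE, mval_mul, Matrix.mul_apply]
  have hsub : ({P.q, P.r} : Finset (Fin n)) ⊆ Finset.univ := Finset.subset_univ _
  rw [← Finset.sum_subset hsub]
  · rw [Finset.sum_pair (Fin.ne_of_lt P.hqr)]
    rw [mval_diag, mval_diag, mul_one, one_mul, add_comm]
  · intro m _ hm
    simp only [Finset.mem_insert, Finset.mem_singleton] at hm
    push_neg at hm
    obtain ⟨hm1, hm2⟩ := hm
    have h1 : (m : ℕ) ≠ (P.q : ℕ) := fun e => hm1 (Fin.ext e)
    have h2 : (m : ℕ) ≠ (P.r : ℕ) := fun e => hm2 (Fin.ext e)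
    rcases lt_or_ge (m : ℕ) (P.q : ℕ) with h | h
    · rw [mval_upper v h, mul_zero]
    · have : (P.r : ℕ) < (m : ℕ) := by
        have := P.hqr; have := P.hr; have := P.hq; omega
      rw [mval_upper u this, zero_mul]

/-- the central elementary element `1 + t E_{k,1}` (`1`-based). -/
def EgG (P : Pos n k) (t : K) : ↥(UT n K) := elemG P.r P.z P.hzr t

lemma EgG_add (P : Pos n k) (s t : K) : EgG P s * EgG P t = EgG P (s + t) :=
  elemG_mul_same _ _ _ s t

lemma EgG_zero (P : Pos n k) : EgG P (0 : K) = 1 := elemG_zero _ _ _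

lemma fE_EgG (P : Pos n k) (t : K) : fE P (EgG P t) = 0 := by
  rw [fE, EgG, mval_elemG, Matrix.add_apply,
    Matrix.one_apply_ne (Fin.ne_of_gt P.hqr)]
  rw [single_apply_of_ne]
  · ring
  · rintro ⟨-, h⟩
    exact absurd (congrArg Fin.val h) (by have := P.hzq; omega)

/-- `EgG P t` commutes with everything modulo `γ_k`. -/
lemma EgG_comm_mem (P : Pos n k) (s : K) (v : ↥(UT n K)) :
    (EgG P s)⁻¹ * v⁻¹ * EgG P s * v ∈ (⊤ : Subgroup ↥(UT n K)).lowerCentralSeries (k - 1) := by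
  have hk1 : k - 1 + 1 = k := by have := P.hk; omega
  apply mem_lcs_of_subDiag
  rw [hk1]
  -- mval W - 1 = mval (Eg⁻¹ * v⁻¹) * (mval Eg * mval v - mval v * mval Eg)
  have key : mval ((EgG P s)⁻¹ * v⁻¹ * EgG P s * v) - 1
      = mval ((EgG P s)⁻¹ * v⁻¹) * (mval (EgG P s) * mval v - mval v * mval (EgG P s)) := by
    rw [mul_sub]
    have h1 : mval ((EgG P s)⁻¹ * v⁻¹) * (mval (EgG P s) * mval v)
        = mval ((EgG P s)⁻¹ * v⁻¹ * (EgG P s * v)) := by rw [← mval_mul, ← mval_mul]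
    have h2 : mval ((EgG P s)⁻¹ * v⁻¹) * (mval v * mval (EgG P s))
        = mval ((EgG P s)⁻¹ * v⁻¹ * (v * EgG P s)) := by rw [← mval_mul, ← mval_mul]
    rw [h1, h2]
    have h3 : (EgG P s)⁻¹ * v⁻¹ * (v * EgG P s) = 1 := by group
    have h4 : (EgG P s)⁻¹ * v⁻¹ * (EgG P s * v)
        = (EgG P s)⁻¹ * v⁻¹ * EgG P s * v := by group
    rw [h3, h4, mval_one]
  rw [key]
  apply SubDiag.mul_unitri_left
  -- entrywise estimate of  E⬝v - v⬝E
  intro i j hij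
  rw [EgG, mval_elemG]
  have expand : (1 + single P.r P.z s) * mval v
        - mval v * (1 + single P.r P.z s)
      = single P.r P.z s * mval v - mval v * single P.r P.z s := by
    noncomm_ring
  rw [expand, Matrix.sub_apply, std_mul_apply, mul_std_apply]
  by_cases hjz : j = P.z
  · subst hjz
    by_cases hir : i = P.r
    · subst hir
      rw [if_pos rfl, if_pos rfl, mval_diag, mval_diag, mul_one, one_mul, sub_self]
    · rw [if_neg hir, if_pos rfl]
      have hiu : (i : ℕ) < (P.r : ℕ) := by
        have h1 : (i : ℕ) ≠ (P.r : ℕ) := fun e => hir (Fin.ext e)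
        have := P.hr; have := P.hz; have := P.hk; omega
      rw [mval_upper v hiu, zero_mul, sub_zero]
  · rw [if_neg hjz]
    by_cases hir : i = P.r
    · subst hir
      rw [if_pos rfl]
      have hzj : (P.z : ℕ) < (j : ℕ) := by
        have h1 : (j : ℕ) ≠ (P.z : ℕ) := fun e => hjz (Fin.ext e)
        have := P.hz; omega
      rw [mval_upper v hzj, mul_zero, zero_sub, neg_zero]
    · rw [if_neg hir, sub_zero]



/-- the quasi-inner map `u ↦ u ⬝ (1 + δ(u_{k,k-1}) E_{k,1})`, as a homomorphism
to the quotient `Γ_{n,k}`. -/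
def psi (P : Pos n k) (δ : K → K) (hδ : ∀ x y, δ (x + y) = δ x + δ y) :
    ↥(UT n K) →* Gamma n k K where
  toFun u := QuotientGroup.mk (u * EgG P (δ (fE P u)))
  map_one' := by
    show (QuotientGroup.mk ((1 : ↥(UT n K)) * EgG P (δ (fE P 1))) : Gamma n k K) = 1
    have hδ0 : δ 0 = 0 := by
      have := hδ 0 0
      rw [add_zero] at this
      exact (left_eq_add.mp this)
    have h1 : (1 : ↥(UT n K)) * EgG P (δ (fE P 1)) = 1 := by
      rw [fE_one, hδ0, EgG_zero, one_mul]
    rw [h1]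
    rfl
  map_mul' u v := by
    show QuotientGroup.mk _ = QuotientGroup.mk _ * QuotientGroup.mk _
    refine Eq.trans ?_ (QuotientGroup.mk_mul _ _ _); rw [fE_mul, hδ, ← EgG_add]
    rw [QuotientGroup.eq]
    have key : (u * v * (EgG P (δ (fE P u)) * EgG P (δ (fE P v))))⁻¹ *
          (u * EgG P (δ (fE P u)) * (v * EgG P (δ (fE P v))))
        = (EgG P (δ (fE P v)))⁻¹ *
            ((EgG P (δ (fE P u)))⁻¹ * v⁻¹ * EgG P (δ (fE P u)) * v) * EgG P (δ (fE P v)) := by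
      group
    rw [key]
    have hmem := EgG_comm_mem P (δ (fE P u)) v
    have := (Subgroup.lowerCentralSeries_normal _ (k - 1)).conj_mem _ hmem (EgG P (δ (fE P v)))⁻¹
    simpa [inv_inv] using this

lemma fE_eq_zero_of_mem (P : Pos n k) {u : ↥(UT n K)}
    (hu : u ∈ (⊤ : Subgroup ↥(UT n K)).lowerCentralSeries (k - 1)) : fE P u = 0 := by
  have h1 : SubDiag (k - 1 + 1) (mval u - 1) := lcs_le_PG (k - 1) hu
  have hk1 : k - 1 + 1 = k := by have := P.hk; omega
  rw [hk1] at h1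
  have := h1 P.r P.q (by have := P.hr; have := P.hq; have := P.hk; omega)
  rw [Matrix.sub_apply, Matrix.one_apply_ne (Fin.ne_of_gt P.hqr), sub_zero] at this
  exact this

lemma psi_ker (P : Pos n k) (δ : K → K) (hδ : ∀ x y, δ (x + y) = δ x + δ y) :
    (⊤ : Subgroup ↥(UT n K)).lowerCentralSeries (k - 1) ≤ (psi P δ hδ).ker := by
  intro u hu
  have hδ0 : δ 0 = 0 := by
    have := hδ 0 0
    rw [add_zero] at this
    exact (left_eq_add.mp this)
  show QuotientGroup.mk (u * EgG P (δ (fE P u))) = 1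
  rw [fE_eq_zero_of_mem P hu, hδ0, EgG_zero, mul_one]
  exact (QuotientGroup.eq_one_iff u).mpr hu

/-- lift of `psi` to the quotient. -/
def Phi (P : Pos n k) (δ : K → K) (hδ : ∀ x y, δ (x + y) = δ x + δ y) :
    Gamma n k K →* Gamma n k K :=
  QuotientGroup.lift _ (psi P δ hδ) (psi_ker P δ hδ)

lemma Phi_mk (P : Pos n k) (δ : K → K) (hδ : ∀ x y, δ (x + y) = δ x + δ y)
    (u : ↥(UT n K)) :
    Phi P δ hδ (QuotientGroup.mk u) = QuotientGroup.mk (u * EgG P (δ (fE P u))) :=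
  QuotientGroup.lift_mk' _ _ u

lemma Phi_comp_Phi (P : Pos n k) (δ δ' : K → K) (hδ : ∀ x y, δ (x + y) = δ x + δ y)
    (hδ' : ∀ x y, δ' (x + y) = δ' x + δ' y) (hsum : ∀ x, δ' x + δ x = 0) :
    (Phi P δ hδ).comp (Phi P δ' hδ') = MonoidHom.id (Gamma n k K) := by
  apply QuotientGroup.monoidHom_ext
  ext u
  show Phi P δ hδ (Phi P δ' hδ' (QuotientGroup.mk u)) = QuotientGroup.mk u
  rw [Phi_mk, Phi_mk]
  rw [fE_mul, fE_EgG, add_zero, mul_assoc, EgG_add, hsum, EgG_zero, mul_one]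

/-- the automorphism of `Γ_{n,k}` attached to an additive map `δ`. -/
def phiAut (P : Pos n k) (δ : K → K) (hδ : ∀ x y, δ (x + y) = δ x + δ y) :
    MulAut (Gamma n k K) :=
  MonoidHom.toMulEquiv (Phi P δ hδ)
    (Phi P (fun x => -δ x) (fun x y => by show -δ (x + y) = -δ x + -δ y; rw [hδ]; ring))
    (Phi_comp_Phi P _ _ _ _ (fun x => by ring))
    (Phi_comp_Phi P _ _ _ _ (fun x => by ring))

lemma phiAut_mk (P : Pos n k) (δ : K → K) (hδ : ∀ x y, δ (x + y) = δ x + δ y)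
    (u : ↥(UT n K)) :
    phiAut P δ hδ (QuotientGroup.mk u) = QuotientGroup.mk (u * EgG P (δ (fE P u))) :=
  Phi_mk P δ hδ u



lemma conj_core (P : Pos n k) (u B : ↥(UT n K)) (t : K)
    (hcore : SubDiag k (mval (B * u) - mval (u * EgG P t * B))) :
    (QuotientGroup.mk (u * EgG P t) : Gamma n k K) = QuotientGroup.mk (B * u * B⁻¹) := by
  rw [QuotientGroup.eq]
  have hk1 : k - 1 + 1 = k := by have := P.hk; omega
  apply mem_lcs_of_subDiag
  rw [hk1]
  apply subDiag_inv_mul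
  have hgrp : u * EgG P t * B * B⁻¹ = u * EgG P t := by group
  have e : mval (B * u * B⁻¹) - mval (u * EgG P t)
      = (mval (B * u) - mval (u * EgG P t * B)) * mval B⁻¹ := by
    rw [sub_mul, ← mval_mul, ← mval_mul, hgrp]
  rw [e]
  exact hcore.mul_unitri_right B⁻¹

lemma isConj_phiAut (P : Pos n k) (δ : K → K) (hδ : ∀ x y, δ (x + y) = δ x + δ y)
    (x : Gamma n k K) : IsConj x (phiAut P δ hδ x) := by
  have hδ0 : δ 0 = 0 := by
    have := hδ 0 0; rw [add_zero] at this; exact (left_eq_add.mp this)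
  induction x using QuotientGroup.induction_on with
  | H u =>
  rw [phiAut_mk]
  by_cases ha : fE P u = 0
  · have : u * EgG P (δ (fE P u)) = u := by rw [ha, hδ0, EgG_zero, mul_one]
    rw [this]; exact IsConj.refl _
  · set a := fE P u with haa
    set s := -δ a / a with hs
    set B := elemG P.q P.z P.hzq s with hB
    apply isConj_iff.mpr
    refine ⟨QuotientGroup.mk B, ?_⟩
    have hmk : (QuotientGroup.mk B : Gamma n k K) * QuotientGroup.mk u *
        (QuotientGroup.mk B)⁻¹ = QuotientGroup.mk (B * u * B⁻¹) := by
      rw [← QuotientGroup.mk_inv, ← QuotientGroup.mk_mul, ← QuotientGroup.mk_mul]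
    refine hmk.trans ?_
    apply (conj_core P u B (δ a) ?_).symm
    -- the core matrix computation
    set E1 := single P.q P.z s with hE1
    set E2 := single P.r P.z (δ a) with hE2
    have hne_zq : P.z ≠ P.q := fun e => absurd (congrArg Fin.val e) (by have := P.hzq; omega)
    have hne_zr : P.z ≠ P.r := fun e => absurd (congrArg Fin.val e) (by have := P.hzr; omega)
    have h0 : E2 * E1 = 0 := single_mul_single_of_ne _ _ _ _ hne_zq _
    have hD : mval (B * u) - mval (u * EgG P (δ a) * B)
        = E1 * mval u - mval u * E1 - mval u * E2 := by
      rw [mval_mul, mval_mul, mval_mul, hB, EgG, mval_elemG, mval_elemG, ← hE1, ← hE2]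
      have expand : (1 + E1) * mval u - mval u * (1 + E2) * (1 + E1)
          = E1 * mval u - mval u * E1 - mval u * E2 - mval u * (E2 * E1) := by noncomm_ring
      rw [expand, h0, mul_zero, sub_zero]
    rw [hD]
    intro i j hij
    rw [Matrix.sub_apply, Matrix.sub_apply, std_mul_apply, mul_std_apply, mul_std_apply]
    by_cases hjz : j = P.z
    · subst hjz
      rw [if_pos rfl, if_pos rfl]
      have hik : (i : ℕ) < k := by have := P.hz; omega
      by_cases hir : i = P.r
      · subst hir
        have hne_rq : ¬(P.r = P.q) :=
          fun e => absurd (congrArg Fin.val e) (by have := P.hqr; omega)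
        have hUrq : mval u P.r P.q = a := rfl
        rw [if_neg hne_rq, hUrq, mval_diag, hs, one_mul]
        field_simp
        ring
      · by_cases hiq : i = P.q
        · subst hiq
          rw [if_pos rfl, mval_diag, mval_upper u P.hqr, zero_mul, sub_zero, mval_diag,
            one_mul, mul_comm]
          ring
        · have hiq' : (i : ℕ) < (P.q : ℕ) := by
            have h1 : (i : ℕ) ≠ (P.r : ℕ) := fun e => hir (Fin.ext e)
            have h2 : (i : ℕ) ≠ (P.q : ℕ) := fun e => hiq (Fin.ext e)
            have := P.hr; have := P.hq; have := P.hk; omega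
          rw [if_neg hiq, mval_upper u hiq', mval_upper u (lt_trans hiq' P.hqr), zero_mul,
            zero_mul, sub_zero, sub_zero]
    · rw [if_neg hjz, if_neg hjz, sub_zero, sub_zero]
      by_cases hiq : i = P.q
      · rw [if_pos hiq]
        have hzj : (P.z : ℕ) < (j : ℕ) := by
          have : (j : ℕ) ≠ (P.z : ℕ) := fun e => hjz (Fin.ext e)
          have := P.hz; omega
        rw [mval_upper u hzj, mul_zero]
      · rw [if_neg hiq]



lemma not_inner (P : Pos n k) (δ : K → K) (hδ : ∀ x y, δ (x + y) = δ x + δ y)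
    (hδ1 : δ 1 = 0) (c : K) (hδc : δ c ≠ 0) (g : Gamma n k K) :
    phiAut P δ hδ ≠ MulAut.conj g := by
  intro heq
  obtain ⟨B, rfl⟩ := QuotientGroup.mk_surjective g
  have hk1 : k - 1 + 1 = k := by have := P.hk; omega
  have key : ∀ t : K, δ t = -(t * mval B P.q P.z) := by
    intro t
    set At := elemG P.r P.q P.hqr t with hAt
    have hfE : fE P At = t := by
      rw [fE, hAt, mval_elemG, Matrix.add_apply,
        Matrix.one_apply_ne (Fin.ne_of_gt P.hqr), single_apply_same]
      ring
    have h1 : phiAut P δ hδ (QuotientGroup.mk At)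
        = MulAut.conj (QuotientGroup.mk B) (QuotientGroup.mk At) := by rw [heq]; rfl
    rw [phiAut_mk, hfE, MulAut.conj_apply] at h1
    have hmk : (QuotientGroup.mk B : Gamma n k K) * QuotientGroup.mk At *
        (QuotientGroup.mk B)⁻¹ = QuotientGroup.mk (B * At * B⁻¹) := by
      rw [← QuotientGroup.mk_inv, ← QuotientGroup.mk_mul, ← QuotientGroup.mk_mul]
    rw [hmk] at h1; have h1 := QuotientGroup.eq.mp h1
    have h3 : SubDiag k (mval ((At * EgG P (δ t))⁻¹ * (B * At * B⁻¹)) - 1) := by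
      have := lcs_le_PG (k - 1) h1
      rw [mem_PG_iff, hk1] at this
      exact this
    have h4 : SubDiag k (mval (B * At * B⁻¹) - mval (At * EgG P (δ t))) :=
      subDiag_sub_of_inv_mul _ _ h3
    have h5 : SubDiag k (mval (B * At) - mval (At * EgG P (δ t) * B)) := by
      have hgrp : B * At * B⁻¹ * B = B * At := by group
      have e : mval (B * At) - mval (At * EgG P (δ t) * B)
          = (mval (B * At * B⁻¹) - mval (At * EgG P (δ t))) * mval B := by
        rw [sub_mul, ← mval_mul, ← mval_mul, hgrp]
      rw [e]
      exact h4.mul_unitri_right B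
    have h6 := h5 P.r P.z (by have := P.hr; have := P.hz; have := P.hk; omega)
    have hne_zq : ¬((P.z : Fin n) = P.q) :=
      fun e => absurd (congrArg Fin.val e) (by have := P.hzq; omega)
    have hne_qr : ¬((P.q : Fin n) = P.r) :=
      fun e => absurd (congrArg Fin.val e) (by have := P.hqr; omega)
    have e1 : mval (B * At) = mval B + mval B * single P.r P.q t := by
      rw [mval_mul, hAt, mval_elemG]
      noncomm_ring
    have e2 : mval (At * EgG P (δ t) * B)
        = mval B + single P.r P.q t * mval B
          + single P.r P.z (δ t) * mval B := by
      rw [mval_mul, mval_mul, hAt, EgG, mval_elemG, mval_elemG]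
      have h0 : single P.r P.q t * single P.r P.z (δ t) = 0 :=
        single_mul_single_of_ne _ _ _ _ hne_qr _
      have expand : (1 + single P.r P.q t) * (1 + single P.r P.z (δ t))
            * mval B
          = mval B + single P.r P.q t * mval B
            + single P.r P.z (δ t) * mval B
            + single P.r P.q t * single P.r P.z (δ t) * mval B := by
        noncomm_ring
      rw [expand, h0, zero_mul, add_zero]
    rw [e1, e2] at h6
    rw [Matrix.sub_apply, Matrix.add_apply, Matrix.add_apply, Matrix.add_apply] at h6
    rw [mul_std_apply, std_mul_apply, std_mul_apply] at h6
    rw [if_neg hne_zq, if_pos rfl, if_pos rfl, mval_diag, mul_one] at h6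
    linear_combination -h6
  have hb0 : mval B P.q P.z = 0 := by
    have h := key 1
    rw [hδ1, one_mul] at h
    exact (neg_eq_zero.mp h.symm)
  have h := key c
  rw [hb0, mul_zero, neg_zero] at h
  exact hδc h

theorem exists_delta (hK : (⊥ : Subfield K) ≠ ⊤) :
    ∃ δ : K → K, (∀ x y, δ (x + y) = δ x + δ y) ∧ δ 1 = 0 ∧ ∃ c, δ c ≠ 0 := by
  have hex : ∃ c : K, c ∉ (⊥ : Subfield K) := by
    by_contra h
    push_neg at h
    exact hK (Subfield.ext fun x => ⟨fun _ => trivial, fun _ => h x⟩)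
  obtain ⟨c, hc⟩ := hex
  set F := (⊥ : Subfield K)
  let p : Submodule F K := Submodule.span F {(1 : K)}
  have h1p : (1 : K) ∈ p := Submodule.mem_span_singleton_self 1
  have hcp : c ∉ p := by
    intro hmem
    rw [Submodule.mem_span_singleton] at hmem
    obtain ⟨a, ha⟩ := hmem
    apply hc
    rw [← ha, Algebra.smul_def, mul_one]
    exact SetLike.coe_mem a
  obtain ⟨q, hq⟩ := Submodule.exists_isCompl p
  set pr := q.linearProjOfIsCompl p hq.symm with hpr
  refine ⟨fun x => ((pr x : K)), ?_, ?_, ⟨c, ?_⟩⟩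
  · intro x y
    show ((pr (x + y) : K)) = (pr x : K) + (pr y : K)
    rw [map_add]; push_cast; ring
  · show ((pr (1 : K) : K)) = 0
    rw [show pr 1 = 0 from Submodule.projectionOnto_apply_of_mem_right hq.symm h1p]
    rfl
  · show ¬((pr c : K)) = 0
    intro h0
    apply hcp
    exact (Submodule.linearProjOfIsCompl_apply_eq_zero_iff hq.symm).mp (Subtype.ext h0)

end GammaAux

/-- If `K` is a field which is *not* a prime field (its prime
subfield is proper), then for `n ≥ 3` and `3 ≤ k ≤ n` the group
`Γ_{n,k} = UT_n(K)/γ_k(UT_n(K))` has a class preserving automorphism that is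
not inner. -/
theorem Gamma_class_preserving_ne_inner_of_not_prime_field (n k : ℕ) (K : Type*) [Field K]
    (hK : (⊥ : Subfield K) ≠ ⊤) (hn : 3 ≤ n) (hk3 : 3 ≤ k) (hkn : k ≤ n) :
    ∃ φ : MulAut (Gamma n k K), (∀ x, IsConj x (φ x)) ∧
      ∀ g : Gamma n k K, φ ≠ MulAut.conj g := by
  obtain ⟨δ, hδ, hδ1, c, hδc⟩ := GammaAux.exists_delta hK
  have P : GammaAux.Pos n k :=
    ⟨⟨k - 1, by omega⟩, ⟨k - 2, by omega⟩, ⟨0, by omega⟩, rfl, rfl, rfl, hk3⟩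
  exact ⟨GammaAux.phiAut P δ hδ, fun x => GammaAux.isConj_phiAut P δ hδ x,
    fun g => GammaAux.not_inner P δ hδ hδ1 c hδc g⟩
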